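/- Let ρ : {1,2,3,…} → ℝ, let F(z) = ∑_{n≥1} ( ∑_{T plane tree, |T|=n} (∏_{v∈T} 1/d(v)!)·(∏_{v∈T} ρ(h_v)) ) z^n, and let G(z) = exp(F(z)) = ∑_{k≥0} F(z)^k/k! (so G has constant term 1). Then for every n ≥ 1, ρ(n)·[z^{n-1}]G(z) = [z^n] log G(z), where log G := ∑_{k≥1} (−1)^{k+1} (G − 1)^k / k is the formal logarithm (well-defined since G − 1 has zero constant term). -/

import Mathlib

/-!
A tree with `n + 1` vertices is a root carrying an ordered forest of `k` trees with `n` vertices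
in total, and its weight is `φ k · ρ (n + 1)` times the product of the weights of those trees.
Since forests of `k` trees are counted by `F ^ k`, this gives
`[zⁿ⁺¹] F = ρ (n + 1) · [zⁿ] ∑ₖ φ k Fᵏ`, for any `φ`. For `φ k = 1 / k!` the series
`∑ₖ φ k Fᵏ` is `G = exp ∘ F`, and `log ∘ exp ∘ F = F` because both sides vanish at `0` and
have derivative `F'`.
-/

/-- A plane tree (ordered rooted tree): a root together with a finite
sequence of plane trees (its root subtrees). -/
inductive PlaneTree : Type where
  | node : List PlaneTree → PlaneTree

namespace PlaneTree

/-- The size of a plane tree: its number of vertices. -/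
def size : PlaneTree → ℕ
  | node ts => 1 + (ts.attach.map fun t => size t.1).sum
decreasing_by simp only [PlaneTree.node.sizeOf_spec]; have := List.sizeOf_lt_of_mem t.2; omega

/-- The degree weight `w_deg(T) = ∏_{v ∈ T} φ_{d(v)}`, where `d(v)` is the
out-degree of the vertex `v`. -/
noncomputable def degWeight (φ : ℕ → ℝ) : PlaneTree → ℝ
  | node ts => φ ts.length * (ts.attach.map fun t => degWeight φ t.1).prod
decreasing_by simp only [PlaneTree.node.sizeOf_spec]; have := List.sizeOf_lt_of_mem t.2; omega

/-- The hook weight `w_h(T) = ∏_{v ∈ T} ρ(h_v)`, where the hook length `h_v`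
is the number of vertices of the subtree of `T` rooted at `v`. -/
noncomputable def hookWeight (ρ : ℕ → ℝ) : PlaneTree → ℝ
  | node ts => ρ (size (node ts)) * (ts.attach.map fun t => hookWeight ρ t.1).prod
decreasing_by simp only [PlaneTree.node.sizeOf_spec]; have := List.sizeOf_lt_of_mem t.2; omega

end PlaneTree

/-- Composition `∑_{k ≥ 0} c_k F^k` of a coefficient sequence `c` with a formal
power series `F` having zero constant term. -/
noncomputable def seriesComp (c : ℕ → ℝ) (F : PowerSeries ℝ) : PowerSeries ℝ :=
  PowerSeries.mk fun n => ∑ k ∈ Finset.range (n + 1), c k * (PowerSeries.coeff n) (F ^ k)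

/-- Composition `∑_{k ≥ 1} b_k H^k` of a coefficient sequence `b` (indexed by `k ≥ 1`)
with a formal power series `H` having zero constant term. -/
noncomputable def seriesComp1 (b : ℕ → ℝ) (H : PowerSeries ℝ) : PowerSeries ℝ :=
  PowerSeries.mk fun n => ∑ k ∈ Finset.Icc 1 n, b k * (PowerSeries.coeff n) (H ^ k)

/-- The formal logarithm `log G = ∑_{k≥1} (−1)^{k+1}(G−1)^k/k` of a formal power
series `G` with constant term `1`. -/
noncomputable def seriesLog (G : PowerSeries ℝ) : PowerSeries ℝ :=
  seriesComp1 (fun k => (-1) ^ (k + 1) / k) (G - 1)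

open PowerSeries

theorem List.finite_setOf_length_le_forall_mem {α : Type*} {s : Set α} (hs : s.Finite) (n : ℕ) :
    {l : List α | l.length ≤ n ∧ ∀ x ∈ l, x ∈ s}.Finite := by
  have := hs.to_subtype
  refine ((List.finite_length_le s n).image (List.map Subtype.val)).subset ?_
  rintro l ⟨hl, hs⟩
  lift l to List s using hs
  exact ⟨l, by simpa using hl, rfl⟩

namespace PlaneTree

instance : Inhabited PlaneTree := ⟨node []⟩

def children : PlaneTree → List PlaneTree
  | node ts => ts

@[simp] theorem node_children (T : PlaneTree) : node T.children = T := by cases T; rfl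

theorem size_node (ts : List PlaneTree) : (node ts).size = 1 + (ts.map size).sum := by
  rw [size, ← List.attach_map_val (l := ts) (f := size)]

theorem degWeight_node (φ : ℕ → ℝ) (ts : List PlaneTree) :
    (node ts).degWeight φ = φ ts.length * (ts.map (degWeight φ)).prod := by
  rw [degWeight, ← List.attach_map_val (l := ts) (f := degWeight φ)]

theorem hookWeight_node (ρ : ℕ → ℝ) (ts : List PlaneTree) :
    (node ts).hookWeight ρ = ρ (node ts).size * (ts.map (hookWeight ρ)).prod := by
  rw [hookWeight, ← List.attach_map_val (l := ts) (f := hookWeight ρ)]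

theorem one_le_size (T : PlaneTree) : 1 ≤ T.size := by
  cases T; rw [size_node]; omega

theorem length_le_sum_map_size (l : List PlaneTree) : l.length ≤ (l.map size).sum := by
  induction l with
  | nil => simp
  | cons t l ih =>
    simp only [List.length_cons, List.map_cons, List.sum_cons]
    have := one_le_size t
    omega

theorem finite_setOf_size_le (n : ℕ) : {T : PlaneTree | T.size ≤ n}.Finite := by
  induction n with
  | zero => exact Set.finite_empty.subset fun T hT => by have := one_le_size T; simp_all
  | succ n ih =>
    refine ((List.finite_setOf_length_le_forall_mem ih n).image node).subset ?_
    rintro ⟨ts⟩ hT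
    rw [Set.mem_ofPred_eq, size_node] at hT
    refine ⟨ts, ⟨?_, fun t ht => ?_⟩, rfl⟩
    · have := length_le_sum_map_size ts; omega
    · have := List.le_sum_of_mem (List.mem_map_of_mem (f := size) ht)
      simp only [Set.mem_ofPred_eq]
      omega

noncomputable def ofSize (n : ℕ) : Finset PlaneTree :=
  ((finite_setOf_size_le n).subset fun _ => le_of_eq : {T : PlaneTree | T.size = n}.Finite).toFinset

@[simp] theorem mem_ofSize {n : ℕ} {T : PlaneTree} : T ∈ ofSize n ↔ T.size = n :=
  Set.Finite.mem_toFinset _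

noncomputable def forests (k m : ℕ) : Finset (List PlaneTree) :=
  ((List.finite_setOf_length_le_forall_mem (finite_setOf_size_le m) k).subset
    fun _ ⟨hk, hm⟩ =>
      ⟨hk.le, fun _ ht => hm ▸ List.le_sum_of_mem (List.mem_map_of_mem (f := size) ht)⟩ :
    {l : List PlaneTree | l.length = k ∧ (l.map size).sum = m}.Finite).toFinset

@[simp] theorem mem_forests {k m : ℕ} {l : List PlaneTree} :
    l ∈ forests k m ↔ l.length = k ∧ (l.map size).sum = m := by
  rw [forests, Set.Finite.mem_toFinset]; rfl

noncomputable def weight (φ ρ : ℕ → ℝ) (T : PlaneTree) : ℝ := T.degWeight φ * T.hookWeight ρ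

theorem weight_node (φ ρ : ℕ → ℝ) (ts : List PlaneTree) :
    weight φ ρ (node ts) = φ ts.length * ρ (node ts).size * (ts.map (weight φ ρ)).prod := by
  rw [weight, degWeight_node, hookWeight_node,
    show weight φ ρ = fun T => T.degWeight φ * T.hookWeight ρ from rfl, List.prod_map_mul]
  ring

end PlaneTree

open PlaneTree

noncomputable def treeSeries (φ ρ : ℕ → ℝ) : ℝ⟦X⟧ :=
  mk fun n => ∑' T : {T : PlaneTree // T.size = n}, T.1.degWeight φ * T.1.hookWeight ρ

section TreeSeries

variable (φ ρ : ℕ → ℝ)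

theorem coeff_treeSeries (n : ℕ) :
    coeff n (treeSeries φ ρ) = ∑ T ∈ ofSize n, weight φ ρ T := by
  rw [treeSeries, coeff_mk, ← Finset.tsum_subtype]
  exact ((Equiv.subtypeEquivRight fun _ => mem_ofSize).tsum_eq (weight φ ρ ∘ Subtype.val)).symm

theorem constantCoeff_treeSeries : constantCoeff (treeSeries φ ρ) = 0 := by
  rw [← coeff_zero_eq_constantCoeff_apply, coeff_treeSeries, Finset.sum_eq_zero]
  intro T hT
  have := one_le_size T
  simp_all

theorem coeff_treeSeries_pow (k m : ℕ) :
    coeff m (treeSeries φ ρ ^ k) = ∑ l ∈ forests k m, (l.map (weight φ ρ)).prod := by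
  induction k generalizing m with
  | zero =>
    rcases m with _ | m
    · have : forests 0 0 = {[]} := by ext l; simp +contextual
      simp [this]
    · have : forests 0 (m + 1) = ∅ := Finset.eq_empty_of_forall_notMem fun l hl => by
        obtain ⟨hk, hm⟩ := mem_forests.1 hl
        simp [List.length_eq_zero_iff.1 hk] at hm
      simp [this]
  | succ k ih =>
    rw [pow_succ', coeff_mul]
    simp only [coeff_treeSeries, ih, Finset.sum_mul_sum, ← Finset.sum_product']
    rw [Finset.sum_sigma']
    refine Finset.sum_nbij' (fun x => x.2.1 :: x.2.2)
      (fun l => ⟨(l.headI.size, (l.tail.map size).sum), (l.headI, l.tail)⟩) ?_ ?_ ?_ ?_ ?_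
    · rintro ⟨⟨i, j⟩, T, l⟩ hx
      simp only [Finset.mem_sigma, Finset.HasAntidiagonal.mem_antidiagonal, Finset.mem_product,
        mem_ofSize, mem_forests] at hx
      simp only [mem_forests, List.length_cons, List.map_cons, List.sum_cons]
      omega
    · rintro (_ | ⟨T, l⟩) hl
      · simp at hl
      · simp_all
    · rintro ⟨⟨i, j⟩, T, l⟩ hx
      simp only [Finset.mem_sigma, Finset.HasAntidiagonal.mem_antidiagonal, Finset.mem_product,
        mem_ofSize, mem_forests] at hx
      simp [hx]
    · rintro (_ | ⟨T, l⟩) hl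
      · simp at hl
      · rfl
    · intro x _
      rfl

theorem coeff_treeSeries_succ (n : ℕ) :
    coeff (n + 1) (treeSeries φ ρ) = ρ (n + 1) * coeff n (seriesComp φ (treeSeries φ ρ)) := by
  rw [coeff_treeSeries, seriesComp, coeff_mk]
  simp only [coeff_treeSeries_pow, Finset.mul_sum]
  rw [Finset.sum_sigma']
  refine (Finset.sum_nbij' (fun x => node x.2) (fun T => ⟨T.children.length, T.children⟩)
    ?_ ?_ ?_ ?_ ?_).symm
  · rintro ⟨k, l⟩ hx
    simp only [Finset.mem_sigma, Finset.mem_range, mem_forests] at hx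
    rw [mem_ofSize, size_node, hx.2.2]
    omega
  · rintro ⟨l⟩ hT
    rw [mem_ofSize, size_node] at hT
    have := length_le_sum_map_size l
    simp [children]
    omega
  · rintro ⟨k, l⟩ hx
    simp only [Finset.mem_sigma, mem_forests] at hx
    simp [children, hx]
  · intro T _
    exact node_children T
  · rintro ⟨k, l⟩ hx
    simp only [Finset.mem_sigma, mem_forests] at hx
    rw [weight_node, size_node, hx.2.1, hx.2.2, add_comm 1 n]
    ring

end TreeSeries

namespace PowerSeries

variable {A : Type*} [CommRing A]

theorem coeff_pow_eq_zero_of_lt {g : A⟦X⟧} (hg : constantCoeff g = 0) {n d : ℕ} (h : n < d) :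
    coeff n (g ^ d) = 0 :=
  X_pow_dvd_iff.mp (pow_dvd_pow_of_dvd (X_dvd_iff.mpr hg) d) n h

theorem coeff_subst_eq_sum_range {f g : A⟦X⟧} (hg : constantCoeff g = 0) (n : ℕ) :
    coeff n (f.subst g) = ∑ d ∈ Finset.range (n + 1), coeff d f * coeff n (g ^ d) := by
  rw [coeff_subst' (HasSubst.of_constantCoeff_zero' hg)]
  refine finsum_eq_sum_of_support_subset _ fun d hd => ?_
  simp only [Function.mem_support, smul_eq_mul, Finset.coe_range, Set.mem_Iio] at hd ⊢
  by_contra! hnd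
  exact hd (by rw [coeff_pow_eq_zero_of_lt hg (by omega), mul_zero])

theorem derivative_log_mul_one_add_X [Algebra ℚ A] : d⁄dX A (log A) * (1 + X) = 1 := by
  ext n
  rcases n with _ | n
  · simp [deriv_log]
  · simp [deriv_log, mul_add, coeff_succ_mul_X, pow_succ]

theorem derivative_subst_exp [Algebra ℚ A] {f : A⟦X⟧} (hf : constantCoeff f = 0) :
    d⁄dX A ((exp A).subst f) = (exp A).subst f * d⁄dX A f := by
  rw [derivative_subst (HasSubst.of_constantCoeff_zero' hf), derivative_exp]

theorem constantCoeff_subst_exp [Algebra ℚ A] {f : A⟦X⟧} (hf : constantCoeff f = 0) :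
    constantCoeff ((exp A).subst f) = 1 := by
  rw [← coeff_zero_eq_constantCoeff_apply, coeff_subst_eq_sum_range hf]
  simp

theorem logOf_subst_exp [Algebra ℚ A] {f : A⟦X⟧} (hf : constantCoeff f = 0) :
    logOf ((exp A).subst f) = f := by
  have := IsAddTorsionFree.of_module_rat A
  set E : A⟦X⟧ := (exp A).subst f
  have hE : constantCoeff E = 1 := constantCoeff_subst_exp hf
  have hsubst : HasSubst (E - 1) := HasSubst.of_constantCoeff_zero' (by simp [hE])
  have hinv : (d⁄dX A (log A)).subst (E - 1) * E = 1 := by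
    have := congrArg (substAlgHom hsubst) (derivative_log_mul_one_add_X (A := A))
    rwa [map_mul, map_add, map_one, coe_substAlgHom, subst_X hsubst, add_sub_cancel] at this
  refine derivative.ext ?_ ?_
  · rw [logOf_eq, derivative_subst hsubst, map_sub, derivative_one, sub_zero,
      derivative_subst_exp hf, ← mul_assoc, hinv, one_mul]
  · rw [constantCoeff_logOf hE, hf]

theorem mk_inv_factorial {K : Type*} [Field K] [CharZero K] :
    (mk fun k => ((k.factorial : K))⁻¹) = exp K := by
  ext k; simp

end PowerSeries

theorem seriesComp_eq_subst (c : ℕ → ℝ) {F : ℝ⟦X⟧} (hF : constantCoeff F = 0) :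
    seriesComp c F = (mk c).subst F := by
  ext n
  rw [seriesComp, coeff_mk, coeff_subst_eq_sum_range hF]
  simp only [coeff_mk]

theorem seriesLog_eq_logOf {G : ℝ⟦X⟧} (hG : constantCoeff G = 1) : seriesLog G = logOf G := by
  ext n
  rw [seriesLog, seriesComp1, logOf_eq, coeff_mk, coeff_subst_eq_sum_range (by simp [hG]),
    Finset.range_eq_Ico, Finset.sum_eq_sum_Ico_succ_bot n.succ_pos]
  simp only [coeff_log, if_pos, zero_mul, zero_add, Nat.succ_eq_add_one,
    Finset.Ico_add_one_right_eq_Icc]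
  refine Finset.sum_congr rfl fun k hk => ?_
  rw [if_neg (by simp at hk; omega)]
  simp

/-- **Hook length formula for forests of labelled rooted trees** (forest version
with `φ(t) = eᵗ`, compositional inverse `φ^{[-1]}(t) = log t`). With `F` the
generating function of plane trees weighted by `∏_v 1/d(v)!` and `∏_v ρ(h_v)`,
and `G = exp(F) = ∑_{k≥0} F^k/k!`, for all `n ≥ 1`:
`ρ(n)·[z^{n-1}]G(z) = [zⁿ] log G(z)`. -/
theorem hook_length_labelled_forests
    (ρ : ℕ → ℝ) (F G : PowerSeries ℝ)
    (hF : F = PowerSeries.mk fun n =>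
      ∑' T : {T : PlaneTree // T.size = n},
        T.1.degWeight (fun k => ((Nat.factorial k : ℝ))⁻¹) * T.1.hookWeight ρ)
    (hG : G = seriesComp (fun k => ((Nat.factorial k : ℝ))⁻¹) F)
    (n : ℕ) (hn : 1 ≤ n) :
    ρ n * (PowerSeries.coeff (n - 1)) G = (PowerSeries.coeff n) (seriesLog G) := by
  have hFtree : F = treeSeries (fun k => ((Nat.factorial k : ℝ))⁻¹) ρ := hF
  have hF0 : constantCoeff F = 0 := hFtree ▸ constantCoeff_treeSeries _ ρ
  have hGexp : G = (exp ℝ).subst F := by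
    rw [hG, seriesComp_eq_subst _ hF0, mk_inv_factorial]
  obtain ⟨m, rfl⟩ : ∃ m, n = m + 1 := ⟨n - 1, by omega⟩
  calc ρ (m + 1) * coeff (m + 1 - 1) G = coeff (m + 1) F := by
        rw [Nat.add_sub_cancel, hFtree, coeff_treeSeries_succ, ← hFtree, ← hG]
    _ = coeff (m + 1) (seriesLog G) := by
        rw [seriesLog_eq_logOf (hGexp ▸ constantCoeff_subst_exp hF0), hGexp,
          logOf_subst_exp hF0]
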